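/- Let G be a noncomplete connected graph of order n. Then con(G) = n − 1 if and only if G contains a simplicial vertex. -/

import Mathlib

open SimpleGraph

/-- The complementary prism `G ∘ Ḡ`: left copies (`Sum.inl`) form `G`,
right copies (`Sum.inr`) form the complement `Gᶜ`, and each `inl v` is
matched to `inr v`. -/
def compPrism {V : Type*} (G : SimpleGraph V) : SimpleGraph (V ⊕ V) where
  Adj x y :=
    match x, y with
    | Sum.inl a, Sum.inl b => G.Adj a b
    | Sum.inr a, Sum.inr b => Gᶜ.Adj a b
    | Sum.inl a, Sum.inr b => a = b
    | Sum.inr a, Sum.inl b => a = b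
  symm := by
    refine ⟨?_⟩
    rintro (a | a) (b | b) h <;> simp_all [compl_adj, adj_comm, eq_comm]
  loopless := by
    refine ⟨?_⟩
    rintro (a | a) h <;> simp_all

/-- `v` lies on some shortest `u`-`w` path in `G`. -/
def inInterval {V : Type*} (G : SimpleGraph V) (u w v : V) : Prop :=
  ∃ p : G.Walk u w, p.IsPath ∧ p.length = G.dist u w ∧ v ∈ p.support

/-- A set is geodesically convex if it contains every vertex on any shortest
path between two of its vertices. -/
def IsGeodConvex {V : Type*} (G : SimpleGraph V) (S : Set V) : Prop :=
  ∀ u ∈ S, ∀ w ∈ S, ∀ v, inInterval G u w v → v ∈ S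

/-- The geodesic convex hull of a set of vertices. -/
def geodHull {V : Type*} (G : SimpleGraph V) (S : Set V) : Set V :=
  ⋂₀ {T | S ⊆ T ∧ IsGeodConvex G T}

/-- The convexity number: the maximum cardinality of a proper convex set. -/
noncomputable def convexityNumber {V : Type*} (G : SimpleGraph V) : ℕ :=
  sSup {n | ∃ S : Set V, IsGeodConvex G S ∧ S ≠ Set.univ ∧ S.ncard = n}

/-! A vertex `v` is simplicial exactly when `V \ {v}` is convex: two nonadjacent neighbours of `v`
have `v` on a geodesic between them, while an interior vertex of a geodesic has its two neighbours
on it distinct and nonadjacent, as otherwise the geodesic could be shortened. Since every proper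
set has at most `n - 1` vertices and the proper sets of size `n - 1` are the complements of
singletons, `con(G) = n - 1` says exactly that some `V \ {v}` is convex. -/

namespace SimpleGraph

variable {V : Type*} {G : SimpleGraph V}

lemma exists_adj_adj_ne_not_adj_of_inInterval {u w v : V} (h : inInterval G u w v)
    (hu : v ≠ u) (hw : v ≠ w) :
    ∃ a b, G.Adj v a ∧ G.Adj v b ∧ a ≠ b ∧ ¬G.Adj a b := by
  obtain ⟨p, -, hlen, hv⟩ := h
  obtain ⟨q, r, rfl⟩ := Walk.mem_support_iff_exists_append.mp hv
  obtain ⟨a, hva, q', hq⟩ := q.reverse.exists_eq_cons_of_ne hu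
  obtain ⟨b, hvb, r', rfl⟩ := r.exists_eq_cons_of_ne hw
  have hqlen : q.length = q'.length + 1 := by
    rw [← Walk.length_reverse q, hq, Walk.length_cons]
  simp only [Walk.length_append, Walk.length_cons, hqlen] at hlen
  refine ⟨a, b, hva, hvb, ?_, fun hab => ?_⟩
  · rintro rfl
    have := G.dist_le (q'.reverse.append r')
    simp only [Walk.length_append, Walk.length_reverse] at this
    omega
  · have := G.dist_le (q'.reverse.append (Walk.cons hab r'))
    simp only [Walk.length_append, Walk.length_reverse, Walk.length_cons] at this
    omega

lemma inInterval_of_adj_of_not_adj {a b v : V} (hav : G.Adj a v) (hvb : G.Adj v b)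
    (hab : a ≠ b) (hnab : ¬G.Adj a b) : inInterval G a b v := by
  let p : G.Walk a b := Walk.cons hav (Walk.cons hvb Walk.nil)
  have hdist : G.dist a b = 2 := by
    have hreach : G.Reachable a b := p.reachable
    have hle : G.dist a b ≤ 2 := G.dist_le p
    have hne0 : G.dist a b ≠ 0 := by simp [hreach.dist_eq_zero_iff, hab]
    have hne1 : G.dist a b ≠ 1 := fun h => hnab (dist_eq_one_iff_adj.mp h)
    omega
  refine ⟨p, ?_, by simp [p, hdist], by simp [p]⟩
  simp [p, Walk.isPath_def, hav.ne, hvb.ne, hab]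

theorem isGeodConvex_compl_singleton_iff {v : V} :
    IsGeodConvex G {v}ᶜ ↔ G.IsClique (G.neighborSet v) := by
  constructor
  · intro hconv a (hva : G.Adj v a) b (hvb : G.Adj v b) hab
    by_contra hnab
    exact hconv a hva.ne.symm b hvb.ne.symm v
      (inInterval_of_adj_of_not_adj hva.symm hvb hab hnab) rfl
  · rintro hclique u hu w hw v' hv' rfl
    obtain ⟨a, b, hva, hvb, hab, hnab⟩ :=
      exists_adj_adj_ne_not_adj_of_inInterval hv' (Ne.symm hu) (Ne.symm hw)
    exact hnab (hclique hva hvb hab)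

lemma isGeodConvex_empty : IsGeodConvex G ∅ := fun _ hu => hu.elim

theorem convexityNumber_eq_card_sub_one_iff [Finite V] [Nonempty V] :
    convexityNumber G = Nat.card V - 1 ↔ ∃ v, IsGeodConvex G {v}ᶜ := by
  set T := {n | ∃ S : Set V, IsGeodConvex G S ∧ S ≠ Set.univ ∧ S.ncard = n}
  have hbdd : ∀ n ∈ T, n ≤ Nat.card V - 1 := by
    rintro _ ⟨S, -, hS, rfl⟩
    have := Set.ncard_lt_card hS
    omega
  constructor
  · intro h
    have hT : T.Nonempty := ⟨0, ∅, isGeodConvex_empty, Set.empty_ne_univ, Set.ncard_empty V⟩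
    obtain ⟨S, hconv, hS, hcard⟩ : Nat.card V - 1 ∈ T := h ▸ Nat.sSup_mem hT ⟨_, hbdd⟩
    obtain ⟨v, hv⟩ : ∃ v, Sᶜ = {v} := by
      rw [← Set.ncard_eq_one, Set.ncard_compl, hcard]
      have := Set.ncard_lt_card hS
      omega
    exact ⟨v, by rwa [← hv, compl_compl]⟩
  · rintro ⟨v, hconv⟩
    have hmem : Nat.card V - 1 ∈ T :=
      ⟨{v}ᶜ, hconv, Set.compl_ne_univ.mpr (Set.singleton_nonempty v),
        by rw [Set.ncard_compl, Set.ncard_singleton]⟩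
    exact le_antisymm (csSup_le ⟨_, hmem⟩ hbdd) (le_csSup ⟨_, hbdd⟩ hmem)

end SimpleGraph

theorem stmt9_general {V : Type*} [Fintype V] (G : SimpleGraph V)
    (hnc : G ≠ ⊤) :
    convexityNumber G = Fintype.card V - 1 ↔
      ∃ v : V, G.IsClique (G.neighborSet v) := by
  have : Nonempty V := by
    by_contra hV
    exact hnc (by ext a; exact (not_nonempty_iff.mp hV).elim a)
  simp only [← Nat.card_eq_fintype_card, convexityNumber_eq_card_sub_one_iff,
    isGeodConvex_compl_singleton_iff]

theorem stmt9 {V : Type*} [Fintype V] (G : SimpleGraph V)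
    (hconn : G.Connected) (hnc : G ≠ ⊤) :
    convexityNumber G = Fintype.card V - 1 ↔
      ∃ v : V, G.IsClique (G.neighborSet v) :=
  stmt9_general G hnc
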